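/- Let γ : R → T*R be a trajectory of the one-degree-of-freedom Hamiltonian H(Q,P) = λ(P² − Q²)/2 with λ > 0, at energy E ∈ (0, c²], entering a ball of radius c around the origin and exiting it. Then the time T spent inside the ball satisfies T = (1/λ) ln(c²/E) + τ, where |τ| is bounded uniformly for E ∈ (0, c²]. -/

import Mathlib

/-!
With `u = e^{2λt}` one has `Q² + P² = 2a₁²u + 2a₂²/u`, so the trajectory is in the ball exactly
while `u` lies between the roots `u₋ ≤ u₊` of `2a₁²u² − c²u + 2a₂²`, and the passage time is
`(1/2λ) log (u₊/u₋)`. The roots are real because the trajectory enters the ball (AM–GM). With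
`d = √(c⁴ − 16a₁²a₂²) ∈ [0, c²]` and `16a₁²a₂² = (2E/λ)²` one gets
`u₊/u₋ = (c² + d)²/(c⁴ − d²) = (λ(c² + d)/(2E))²`, so the time exceeds `(1/λ) log (c²/E)` by
`(1/λ) log (λ (c² + d)/(2c²))`, and `(c² + d)/(2c²) ∈ [1/2, 1]` bounds this by
`(|log λ| + log 2)/λ`.
-/

open MeasureTheory Real Set

lemma mul_add_div_le_iff_mem_Icc {A B C r₁ r₂ u : ℝ} (hA : 0 < A) (hu : 0 < u) (hr : r₁ ≤ r₂)
    (hsum : A * (r₁ + r₂) = C) (hprod : A * (r₁ * r₂) = B) :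
    A * u + B / u ≤ C ↔ u ∈ Icc r₁ r₂ := by
  have hfactor : A * u + B / u - C = A * ((u - r₁) * (u - r₂)) / u := by
    field_simp
    linear_combination u * hsum - hprod
  rw [← sub_nonpos, hfactor, div_le_iff₀ hu, zero_mul, ← mul_zero A, mul_le_mul_iff_right₀ hA,
    mul_nonpos_iff, mem_Icc]
  constructor
  · rintro (⟨h₁, h₂⟩ | ⟨h₁, h₂⟩) <;> constructor <;> linarith
  · exact fun ⟨h₁, h₂⟩ => Or.inl ⟨by linarith, by linarith⟩

lemma setOf_mul_exp_add_mul_exp_neg_le_eq_Icc {A B C k r₁ r₂ : ℝ} (hk : 0 < k) (hA : 0 < A)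
    (hr₁ : 0 < r₁) (hr : r₁ ≤ r₂) (hsum : A * (r₁ + r₂) = C) (hprod : A * (r₁ * r₂) = B) :
    {t | A * exp (k * t) + B * exp (-(k * t)) ≤ C} = Icc (log r₁ / k) (log r₂ / k) := by
  ext t
  rw [mem_ofPred_eq, exp_neg, ← div_eq_mul_inv,
    mul_add_div_le_iff_mem_Icc hA (exp_pos _) hr hsum hprod, mem_Icc, mem_Icc,
    div_le_iff₀' hk, le_div_iff₀' hk, log_le_iff_le_exp hr₁, le_log_iff_exp_le (hr₁.trans_le hr)]

lemma toReal_volume_setOf_mul_exp_add_mul_exp_neg_le {A B C k : ℝ} (hk : 0 < k) (hA : 0 < A)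
    (hB : 0 < B) (hC : 0 < C) (hdisc : 4 * A * B < C ^ 2) :
    (volume {t | A * exp (k * t) + B * exp (-(k * t)) ≤ C}).toReal
      = log ((C + √(C ^ 2 - 4 * A * B)) ^ 2 / (4 * A * B)) / k := by
  set d := √(C ^ 2 - 4 * A * B)
  have hd : d ^ 2 = C ^ 2 - 4 * A * B := sq_sqrt (by linarith)
  have hd₀ : 0 ≤ d := sqrt_nonneg _
  have hCd : 0 < C - d := by nlinarith
  have hr₁ : 0 < (C - d) / (2 * A) := by positivity
  have hr : (C - d) / (2 * A) ≤ (C + d) / (2 * A) := by gcongr; linarith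
  have hlog : log ((C - d) / (2 * A)) / k ≤ log ((C + d) / (2 * A)) / k := by
    gcongr
  rw [setOf_mul_exp_add_mul_exp_neg_le_eq_Icc hk hA hr₁ hr (by field_simp; ring)
      (by field_simp; linear_combination -hd),
    volume_Icc, ENNReal.toReal_ofReal (sub_nonneg.2 hlog), ← sub_div,
    ← log_div (hr₁.trans_le hr).ne' hr₁.ne']
  congr 2
  field_simp
  linear_combination hd

lemma four_mul_mul_lt_sq_of_mul_exp_add_mul_exp_neg_lt {A B C s : ℝ} (hA : 0 ≤ A) (hB : 0 ≤ B)
    (h : A * exp s + B * exp (-s) < C) : 4 * A * B < C ^ 2 := by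
  have hinv : exp s * exp (-s) = 1 := by rw [← exp_add, add_neg_cancel, exp_zero]
  have hamgm : 4 * A * B ≤ (A * exp s + B * exp (-s)) ^ 2 := by
    nlinarith [sq_nonneg (A * exp s - B * exp (-s))]
  have hnonneg : 0 ≤ A * exp s + B * exp (-s) := by positivity
  nlinarith

lemma abs_log_le_log_two_of_mem_Icc {x : ℝ} (hx : x ∈ Icc (1 / 2) 1) : |log x| ≤ log 2 := by
  have hlog_half : log (1 / 2) = -log 2 := by rw [one_div, log_inv]
  rw [abs_le]
  constructor
  · rw [← hlog_half]; exact log_le_log (by norm_num) hx.1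
  · linarith [log_nonpos (by linarith [hx.1]) hx.2, log_nonneg one_le_two]

lemma abs_log_mul_add_div_two_mul_le {lam C d : ℝ} (hlam : 0 < lam) (hC : 0 < C) (hd : 0 ≤ d)
    (hdC : d ≤ C) : |log (lam * ((C + d) / (2 * C)))| ≤ |log lam| + log 2 := by
  rw [log_mul hlam.ne' (by positivity)]
  refine (abs_add_le _ _).trans (add_le_add_right (abs_log_le_log_two_of_mem_Icc ⟨?_, ?_⟩) _)
  · rw [le_div_iff₀ (by positivity)]; linarith
  · rw [div_le_one (by positivity)]; linarith

theorem passage_time_hyperbolic_general (lam c : ℝ) (hlam : 0 < lam) :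
    ∃ τB : ℝ, 0 < τB ∧ ∀ E a₁ a₂ : ℝ, E ∈ Set.Ioc (0 : ℝ) (c ^ 2) →
      E = -(2 * lam * a₁ * a₂) →
      (let Q : ℝ → ℝ := fun t => a₁ * Real.exp (lam * t) + a₂ * Real.exp (-(lam * t))
       let P : ℝ → ℝ := fun t => a₁ * Real.exp (lam * t) - a₂ * Real.exp (-(lam * t))
       (∃ t : ℝ, (Q t) ^ 2 + (P t) ^ 2 < c ^ 2) →
       |(volume {t : ℝ | (Q t) ^ 2 + (P t) ^ 2 ≤ c ^ 2}).toReal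
          - (1 / lam) * Real.log (c ^ 2 / E)| ≤ τB) := by
  refine ⟨(|log lam| + log 2) / lam, by positivity, ?_⟩
  rintro E a₁ a₂ ⟨hE₀, hEc⟩ hE Q P ⟨t₀, ht₀⟩
  have hQP : ∀ t, Q t ^ 2 + P t ^ 2
      = 2 * a₁ ^ 2 * exp (2 * lam * t) + 2 * a₂ ^ 2 * exp (-(2 * lam * t)) := by
    intro t
    rw [show 2 * lam * t = lam * t + lam * t by ring, neg_add, exp_add, exp_add]
    ring
  have hdisc : 4 * (2 * a₁ ^ 2) * (2 * a₂ ^ 2) < (c ^ 2) ^ 2 :=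
    four_mul_mul_lt_sq_of_mul_exp_add_mul_exp_neg_lt (by positivity) (by positivity)
      (hQP t₀ ▸ ht₀)
  have ha₁ : a₁ ≠ 0 := by rintro rfl; linarith
  have ha₂ : a₂ ≠ 0 := by rintro rfl; linarith
  have hc : 0 < c ^ 2 := hE₀.trans_le hEc
  simp only [hQP, toReal_volume_setOf_mul_exp_add_mul_exp_neg_le (by positivity : 0 < 2 * lam)
    (by positivity) (by positivity) hc hdisc]
  have hc₀ : c ≠ 0 := by rintro rfl; norm_num at hc
  set d := √((c ^ 2) ^ 2 - 4 * (2 * a₁ ^ 2) * (2 * a₂ ^ 2))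
  have hd : 0 ≤ d := sqrt_nonneg _
  have hdc : d ≤ c ^ 2 := (sqrt_le_left hc.le).2 (by nlinarith)
  have hdisc_eq : 4 * (2 * a₁ ^ 2) * (2 * a₂ ^ 2) = (2 * E / lam) ^ 2 := by
    rw [hE]; field_simp; ring
  have hratio : (c ^ 2 + d) / (2 * E / lam) = c ^ 2 / E * (lam * ((c ^ 2 + d) / (2 * c ^ 2))) := by
    field_simp
  rw [hdisc_eq, ← div_pow, log_pow, hratio, log_mul (by positivity) (by positivity)]
  calc _ = |log (lam * ((c ^ 2 + d) / (2 * c ^ 2))) / lam| := by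
        congr 1
        field_simp
        ring
    _ = |log (lam * ((c ^ 2 + d) / (2 * c ^ 2)))| / lam := by rw [abs_div, abs_of_pos hlam]
    _ ≤ _ := by gcongr; exact abs_log_mul_add_div_two_mul_le hlam hc hd hdc

/-- For the hyperbolic Hamiltonian `H(Q,P) = λ(P² − Q²)/2` with `λ > 0`,
a trajectory `Q(t) = a₁e^{λt} + a₂e^{−λt}`, `P(t) = a₁e^{λt} − a₂e^{−λt}` at energy
`E = −2λa₁a₂ ∈ (0, c²]` that enters the ball of radius `c` around the origin spends in it a
time `T = (1/λ)ln(c²/E) + τ` with `|τ|` bounded uniformly in `E ∈ (0, c²]`. -/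
theorem passage_time_hyperbolic (lam c : ℝ) (hlam : 0 < lam) (hc : 0 < c) :
    ∃ τB : ℝ, 0 < τB ∧ ∀ E a₁ a₂ : ℝ, E ∈ Set.Ioc (0 : ℝ) (c ^ 2) →
      E = -(2 * lam * a₁ * a₂) →
      (let Q : ℝ → ℝ := fun t => a₁ * Real.exp (lam * t) + a₂ * Real.exp (-(lam * t))
       let P : ℝ → ℝ := fun t => a₁ * Real.exp (lam * t) - a₂ * Real.exp (-(lam * t))
       (∃ t : ℝ, (Q t) ^ 2 + (P t) ^ 2 < c ^ 2) →
       |(volume {t : ℝ | (Q t) ^ 2 + (P t) ^ 2 ≤ c ^ 2}).toReal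
          - (1 / lam) * Real.log (c ^ 2 / E)| ≤ τB) :=
  passage_time_hyperbolic_general lam c hlam
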